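/- Let ψ be a 2-cocycle on SV = SV[Γ,s] and let f be the linear map associated to ψ by the recursive formulas below; set φ = ψ − ψ_f. Then φ(L_{α,i}, L_{β,j}) = 0 for all α, β ∈ Γ and all i, j ∈ ℤ_{≥0}. -/

import Mathlib

/-!
Put `φ = ψ - ψ_f`. The recursion defining `f` on the `L_{α,i}` says exactly that
`φ(L_{0,0}, L_{γ,m}) = 0`, since `[L_{0,0}, L_{γ,m}] = γ L_{γ,m} + m L_{γ,m-1}`. Feeding this into the
cocycle identity for `(L_{0,0}, L_{α,i}, L_{β,j})` gives the recurrence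
`(α + β) φ(L_{α,i}, L_{β,j}) + i φ(L_{α,i-1}, L_{β,j}) + j φ(L_{α,i}, L_{β,j-1}) = 0`,
and every doubly indexed sequence satisfying such a recurrence vanishes.
-/

noncomputable section

namespace SVSuper

variable (Γ : AddSubgroup ℂ) (s : ℂ)

/-- Basis index type of `SV[Γ,s]`: `Sum.inl (α, i)` stands for `L_{α,i}` (`α ∈ Γ`),
`Sum.inr (μ, j)` stands for `G_{μ,j}` (`μ ∈ s + Γ`). -/
abbrev Idx : Type := (Γ × ℕ) ⊕ ({μ : ℂ // μ - s ∈ Γ} × ℕ)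

/-- The underlying vector space of `SV[Γ,s]`: the free `ℂ`-module on `Idx`. -/
abbrev SV : Type := Idx Γ s →₀ ℂ

/-- The basis vector `L_{α,i}`. -/
def lgen (α : ℂ) (hα : α ∈ Γ) (i : ℕ) : SV Γ s :=
  Finsupp.single (Sum.inl (⟨α, hα⟩, i)) 1

/-- The basis vector `G_{μ,j}`. -/
def ggen (μ : ℂ) (hμ : μ - s ∈ Γ) (j : ℕ) : SV Γ s :=
  Finsupp.single (Sum.inr (⟨μ, hμ⟩, j)) 1

theorem memLG {α μ : ℂ} (hα : α ∈ Γ) (hμ : μ - s ∈ Γ) : α + μ - s ∈ Γ := by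
  have h : α + μ - s = α + (μ - s) := by ring
  rw [h]; exact add_mem hα hμ

theorem memGG (hs : 2 * s ∈ Γ) {μ ν : ℂ} (hμ : μ - s ∈ Γ) (hν : ν - s ∈ Γ) :
    μ + ν ∈ Γ := by
  have h : μ + ν = (μ - s) + (ν - s) + 2 * s := by ring
  rw [h]; exact add_mem (add_mem hμ hν) hs

/-- The bracket on basis vectors (any symbol with second index `-1` is interpreted as `0`;
here this is automatic since the corresponding coefficient vanishes when `i = j = 0`). -/
def bk (hs : 2 * s ∈ Γ) : Idx Γ s → Idx Γ s → SV Γ s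
  | Sum.inl (⟨α, hα⟩, i), Sum.inl (⟨β, hβ⟩, j) =>
      (β - α) • lgen Γ s (α + β) (add_mem hα hβ) (i + j)
        + ((j : ℂ) - (i : ℂ)) • lgen Γ s (α + β) (add_mem hα hβ) (i + j - 1)
  | Sum.inl (⟨α, hα⟩, i), Sum.inr (⟨μ, hμ⟩, j) =>
      (μ - α / 2) • ggen Γ s (α + μ) (memLG Γ s hα hμ) (i + j)
        + ((j : ℂ) - (i : ℂ) / 2) • ggen Γ s (α + μ) (memLG Γ s hα hμ) (i + j - 1)
  | Sum.inr (⟨μ, hμ⟩, i), Sum.inl (⟨α, hα⟩, j) =>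
      -((μ - α / 2) • ggen Γ s (α + μ) (memLG Γ s hα hμ) (j + i)
        + ((i : ℂ) - (j : ℂ) / 2) • ggen Γ s (α + μ) (memLG Γ s hα hμ) (j + i - 1))
  | Sum.inr (⟨μ, hμ⟩, i), Sum.inr (⟨ν, hν⟩, j) =>
      (2 : ℂ) • lgen Γ s (μ + ν) (memGG Γ s hs hμ hν) (i + j)

/-- The bilinear bracket of `SV[Γ,s]`. -/
def bkt (hs : 2 * s ∈ Γ) (x y : SV Γ s) : SV Γ s :=
  x.sum fun a ca => y.sum fun b cb => (ca * cb) • bk Γ s hs a b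

/-- `x` lies in the even part `SV_0̄` (the span of the `L_{α,i}`). -/
def IsEvenElt (x : SV Γ s) : Prop := ∀ b, x (Sum.inr b) = 0

/-- `x` lies in the odd part `SV_1̄` (the span of the `G_{μ,j}`). -/
def IsOddElt (x : SV Γ s) : Prop := ∀ a, x (Sum.inl a) = 0

/-- `x` is `ℤ₂`-homogeneous. -/
def IsHomog (x : SV Γ s) : Prop := IsEvenElt Γ s x ∨ IsOddElt Γ s x

/-- `x` lies in the degree-`γ` component `SV_γ = span{L_{γ,i}, G_{γ,i}}` of the `Ω`-grading. -/
def InDeg (γ : ℂ) (x : SV Γ s) : Prop :=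
  (∀ p : Γ × ℕ, (p.1 : ℂ) ≠ γ → x (Sum.inl p) = 0) ∧
  (∀ q : {μ : ℂ // μ - s ∈ Γ} × ℕ, (q.1 : ℂ) ≠ γ → x (Sum.inr q) = 0)

/-- The group `Ω`, generated by `Γ ∪ {s}`. -/
def Omega : AddSubgroup ℂ := Γ ⊔ AddSubgroup.closure {s}

theorem gamma_mem_Omega {α : ℂ} (hα : α ∈ Γ) : α ∈ Omega Γ s :=
  AddSubgroup.mem_sup_left hα

theorem s_mem_Omega : s ∈ Omega Γ s :=
  AddSubgroup.mem_sup_right (AddSubgroup.subset_closure (Set.mem_singleton s))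

theorem smu_mem_Omega {μ : ℂ} (hμ : μ - s ∈ Γ) : μ ∈ Omega Γ s := by
  have h := add_mem (gamma_mem_Omega Γ s hμ) (s_mem_Omega Γ s)
  rwa [sub_add_cancel] at h

/-- The `Ω`-degree of a basis index. -/
def idxDeg : Idx Γ s → ℂ
  | Sum.inl p => (p.1 : ℂ)
  | Sum.inr q => (q.1 : ℂ)

theorem idxDeg_mem (a : Idx Γ s) : idxDeg Γ s a ∈ Omega Γ s := by
  cases a with
  | inl p => exact gamma_mem_Omega Γ s p.1.2
  | inr q => exact smu_mem_Omega Γ s q.1.2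

/-- The derivation `D_φ` attached to a group homomorphism `φ : (Ω,+) → (ℂ,+)`:
`D_φ (L_{α,i}) = φ(α) • L_{α,i}` and `D_φ (G_{μ,j}) = φ(μ) • G_{μ,j}`. -/
def Dphi (φ : ↥(Omega Γ s) →+ ℂ) : SV Γ s →ₗ[ℂ] SV Γ s :=
  Finsupp.lsum ℂ fun a => φ ⟨idxDeg Γ s a, idxDeg_mem Γ s a⟩ • Finsupp.lsingle a

/-- `D` is a parity-`0` (even) derivation of `SV[Γ,s]`. -/
def IsEvenDer (hs : 2 * s ∈ Γ) (D : SV Γ s →ₗ[ℂ] SV Γ s) : Prop :=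
  (∀ x, IsEvenElt Γ s x → IsEvenElt Γ s (D x)) ∧
  (∀ x, IsOddElt Γ s x → IsOddElt Γ s (D x)) ∧
  (∀ x y, IsHomog Γ s x →
    D (bkt Γ s hs x y) = bkt Γ s hs (D x) y + bkt Γ s hs x (D y))

/-- `D` is a parity-`1` (odd) derivation of `SV[Γ,s]`. -/
def IsOddDer (hs : 2 * s ∈ Γ) (D : SV Γ s →ₗ[ℂ] SV Γ s) : Prop :=
  (∀ x, IsEvenElt Γ s x → IsOddElt Γ s (D x)) ∧
  (∀ x, IsOddElt Γ s x → IsEvenElt Γ s (D x)) ∧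
  (∀ x y, IsEvenElt Γ s x →
    D (bkt Γ s hs x y) = bkt Γ s hs (D x) y + bkt Γ s hs x (D y)) ∧
  (∀ x y, IsOddElt Γ s x →
    D (bkt Γ s hs x y) = bkt Γ s hs (D x) y - bkt Γ s hs x (D y))

/-- `D` is a derivation of `SV[Γ,s]`: a sum of an even and an odd derivation. -/
def IsDer (hs : 2 * s ∈ Γ) (D : SV Γ s →ₗ[ℂ] SV Γ s) : Prop :=
  ∃ D0 D1, IsEvenDer Γ s hs D0 ∧ IsOddDer Γ s hs D1 ∧ D = D0 + D1

/-- `D` has degree `γ`: it maps `SV_δ` into `SV_{δ+γ}` for every `δ`. -/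
def HasDeg (γ : ℂ) (D : SV Γ s →ₗ[ℂ] SV Γ s) : Prop :=
  ∀ (δ : ℂ) (x : SV Γ s), InDeg Γ s δ x → InDeg Γ s (δ + γ) (D x)

/-- `ψ` is a 2-cocycle on `SV[Γ,s]` (super skew-symmetry and super Jacobi identity,
with the sign `(-1)^{|x||y|}` spelled out according to the parities). -/
def IsCocycle (hs : 2 * s ∈ Γ) (ψ : SV Γ s →ₗ[ℂ] SV Γ s →ₗ[ℂ] ℂ) : Prop :=
  (∀ x y, IsHomog Γ s x → IsHomog Γ s y → (IsEvenElt Γ s x ∨ IsEvenElt Γ s y) →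
    ψ x y = - ψ y x) ∧
  (∀ x y, IsOddElt Γ s x → IsOddElt Γ s y → ψ x y = ψ y x) ∧
  (∀ x y z, IsHomog Γ s x → IsHomog Γ s y → (IsEvenElt Γ s x ∨ IsEvenElt Γ s y) →
    ψ x (bkt Γ s hs y z) = ψ (bkt Γ s hs x y) z + ψ y (bkt Γ s hs x z)) ∧
  (∀ x y z, IsOddElt Γ s x → IsOddElt Γ s y →
    ψ x (bkt Γ s hs y z) = ψ (bkt Γ s hs x y) z - ψ y (bkt Γ s hs x z))

/-- `f : SV → ℂ` satisfies the recursive formulas associated to the 2-cocycle `ψ`. -/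
def IsAssocMap (hs : 2 * s ∈ Γ) (ψ : SV Γ s →ₗ[ℂ] SV Γ s →ₗ[ℂ] ℂ)
    (f : SV Γ s →ₗ[ℂ] ℂ) : Prop :=
  (∀ i : ℕ, f (lgen Γ s 0 (zero_mem Γ) i)
      = ψ (lgen Γ s 0 (zero_mem Γ) 0) (lgen Γ s 0 (zero_mem Γ) (i + 1)) / (i + 1)) ∧
  (∀ (α : ℂ) (hα : α ∈ Γ) (i : ℕ), α ≠ 0 →
    f (lgen Γ s α hα i)
      = (ψ (lgen Γ s 0 (zero_mem Γ) 0) (lgen Γ s α hα i) - (i : ℂ) * f (lgen Γ s α hα (i - 1))) / α) ∧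
  (∀ (h0 : (0 : ℂ) - s ∈ Γ) (i : ℕ),
    f (ggen Γ s 0 h0 i) = (2 / (2 * (i : ℂ) - 1)) * ψ (lgen Γ s 0 (zero_mem Γ) 1) (ggen Γ s 0 h0 i)) ∧
  (∀ (μ : ℂ) (hμ : μ - s ∈ Γ) (i : ℕ), μ ≠ 0 →
    f (ggen Γ s μ hμ i)
      = (ψ (lgen Γ s 0 (zero_mem Γ) 0) (ggen Γ s μ hμ i) - (i : ℂ) * f (ggen Γ s μ hμ (i - 1))) / μ)

theorem eq_zero_of_mul_add_nat_mul_pred {K : Type*} [Field K] [CharZero K] {g : ℕ → ℕ → K}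
    {c : K} (h : ∀ i j : ℕ, c * g i j + i * g (i - 1) j + j * g i (j - 1) = 0) (i j : ℕ) :
    g i j = 0 := by
  by_cases hc : c = 0
  · -- for `c = 0`, `g i (j + 1) = 0` forces `g (i + 1) j = 0`: induct along antidiagonals
    subst hc
    induction i generalizing j with
    | zero => simpa [Nat.cast_add_one_ne_zero] using h 0 (j + 1)
    | succ i ih => simpa [ih, Nat.cast_add_one_ne_zero] using h (i + 1) (j + 1)
  · induction i generalizing j with
    | zero =>
      induction j with
      | zero => simpa [hc] using h 0 0
      | succ j ihj => simpa [hc, ihj] using h 0 (j + 1)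
    | succ i ih =>
      induction j with
      | zero => simpa [hc, ih] using h (i + 1) 0
      | succ j ihj => simpa [hc, ih, ihj] using h (i + 1) (j + 1)

section LGenerators

variable {Γ : AddSubgroup ℂ} {s : ℂ}

theorem lgen_isEven (α : ℂ) (hα : α ∈ Γ) (i : ℕ) : IsEvenElt Γ s (lgen Γ s α hα i) := by
  intro b
  simp [lgen]

theorem lgen_isHomog (α : ℂ) (hα : α ∈ Γ) (i : ℕ) : IsHomog Γ s (lgen Γ s α hα i) :=
  Or.inl (lgen_isEven α hα i)

variable (hs : 2 * s ∈ Γ)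

theorem bkt_single_single (a b : Idx Γ s) (c d : ℂ) :
    bkt Γ s hs (Finsupp.single a c) (Finsupp.single b d) = (c * d) • bk Γ s hs a b := by
  unfold bkt
  rw [Finsupp.sum_single_index (by simp), Finsupp.sum_single_index (by simp)]

theorem bkt_lgen_lgen {α β γ : ℂ} (hα : α ∈ Γ) (hβ : β ∈ Γ) (hγ : γ ∈ Γ) (h : α + β = γ)
    (i j : ℕ) :
    bkt Γ s hs (lgen Γ s α hα i) (lgen Γ s β hβ j)
      = (β - α) • lgen Γ s γ hγ (i + j) + ((j : ℂ) - i) • lgen Γ s γ hγ (i + j - 1) := by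
  subst h
  rw [lgen, lgen, bkt_single_single, one_mul, one_smul]
  rfl

end LGenerators

section ReducedCocycle

variable {Γ : AddSubgroup ℂ} {s : ℂ} (hs : 2 * s ∈ Γ)
  (ψ : SV Γ s →ₗ[ℂ] SV Γ s →ₗ[ℂ] ℂ) (f : SV Γ s →ₗ[ℂ] ℂ)

def phiLL (α : ℂ) (hα : α ∈ Γ) (i : ℕ) (β : ℂ) (hβ : β ∈ Γ) (j : ℕ) : ℂ :=
  ψ (lgen Γ s α hα i) (lgen Γ s β hβ j) - f (bkt Γ s hs (lgen Γ s α hα i) (lgen Γ s β hβ j))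

theorem psi_lgen_zero_zero_left (hψ : IsCocycle Γ s hs ψ) (hf : IsAssocMap Γ s hs ψ f)
    (γ : ℂ) (hγ : γ ∈ Γ) (m : ℕ) :
    ψ (lgen Γ s 0 (zero_mem Γ) 0) (lgen Γ s γ hγ m)
      = γ * f (lgen Γ s γ hγ m) + m * f (lgen Γ s γ hγ (m - 1)) := by
  by_cases hγ0 : γ = 0
  · subst hγ0
    cases m with
    | zero =>
      have hskew := hψ.1 (lgen Γ s 0 (zero_mem Γ) 0) (lgen Γ s 0 (zero_mem Γ) 0)
        (lgen_isHomog _ _ _) (lgen_isHomog _ _ _) (Or.inl (lgen_isEven _ _ _))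
      simp only [Nat.cast_zero, zero_mul, add_zero]
      linear_combination hskew / 2
    | succ k =>
      rw [Nat.add_sub_cancel, hf.1 k]
      have hk : (k : ℂ) + 1 ≠ 0 := Nat.cast_add_one_ne_zero k
      push_cast
      field_simp
      ring
  · rw [hf.2.1 γ hγ m hγ0]
    field_simp
    ring

theorem phiLL_recurrence (hψ : IsCocycle Γ s hs ψ) (hf : IsAssocMap Γ s hs ψ f)
    (α β : ℂ) (hα : α ∈ Γ) (hβ : β ∈ Γ) (i j : ℕ) :
    (α + β) * phiLL hs ψ f α hα i β hβ j + i * phiLL hs ψ f α hα (i - 1) β hβ j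
      + j * phiLL hs ψ f α hα i β hβ (j - 1) = 0 := by
  have hαβ := add_mem hα hβ
  have jac := hψ.2.2.1 (lgen Γ s 0 (zero_mem Γ) 0) (lgen Γ s α hα i) (lgen Γ s β hβ j)
    (lgen_isHomog _ _ _) (lgen_isHomog _ _ _) (Or.inl (lgen_isEven _ _ _))
  rw [bkt_lgen_lgen hs hα hβ hαβ rfl, bkt_lgen_lgen hs (zero_mem Γ) hα hα (zero_add α),
    bkt_lgen_lgen hs (zero_mem Γ) hβ hβ (zero_add β)] at jac
  simp only [map_add, map_smul, LinearMap.add_apply, LinearMap.smul_apply, smul_eq_mul,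
    Nat.zero_add, Nat.cast_zero, sub_zero,
    psi_lgen_zero_zero_left hs ψ f hψ hf] at jac
  simp only [phiLL, bkt_lgen_lgen hs hα hβ hαβ rfl, map_add, map_smul, smul_eq_mul]
  rcases i with _ | i <;> rcases j with _ | j
  · simp only [Nat.cast_zero] at jac ⊢
    linear_combination -jac
  · simp only [Nat.zero_sub, Nat.zero_add, Nat.add_sub_cancel] at jac ⊢
    push_cast at jac ⊢
    linear_combination -jac
  · simp only [Nat.zero_sub, Nat.add_zero, Nat.add_sub_cancel] at jac ⊢
    push_cast at jac ⊢
    linear_combination -jac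
  · simp only [Nat.add_sub_cancel, show i + 1 + (j + 1) - 1 = i + j + 1 by omega,
      show i + (j + 1) = i + j + 1 by omega, show i + 1 + j = i + j + 1 by omega,
      show i + j + 1 - 1 = i + j by omega] at jac ⊢
    push_cast at jac ⊢
    linear_combination -jac

end ReducedCocycle

theorem cocycle_LL_general (Γ : AddSubgroup ℂ)
    (s : ℂ) (hs : 2 * s ∈ Γ) :
    ∀ ψ : SV Γ s →ₗ[ℂ] SV Γ s →ₗ[ℂ] ℂ, IsCocycle Γ s hs ψ →
      ∀ f : SV Γ s →ₗ[ℂ] ℂ, IsAssocMap Γ s hs ψ f →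
        ∀ (α : ℂ) (hα : α ∈ Γ) (i : ℕ) (β : ℂ) (hβ : β ∈ Γ) (j : ℕ),
          ψ (lgen Γ s α hα i) (lgen Γ s β hβ j)
            - f (bkt Γ s hs (lgen Γ s α hα i) (lgen Γ s β hβ j)) = 0 := by
  intro ψ hψ f hf α hα i β hβ j
  exact eq_zero_of_mul_add_nat_mul_pred (g := fun i j => phiLL hs ψ f α hα i β hβ j)
    (phiLL_recurrence hs ψ f hψ hf α β hα hβ) i j

/-- For a 2-cocycle `ψ` with associated map `f`, the 2-cocycle `φ = ψ - ψ_f`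
vanishes on pairs `(L_{α,i}, L_{β,j})`. -/
theorem cocycle_LL (Γ : AddSubgroup ℂ) (hΓ : ∀ n : ℤ, (n : ℂ) ∈ Γ)
    (s : ℂ) (hs : 2 * s ∈ Γ) :
    ∀ ψ : SV Γ s →ₗ[ℂ] SV Γ s →ₗ[ℂ] ℂ, IsCocycle Γ s hs ψ →
      ∀ f : SV Γ s →ₗ[ℂ] ℂ, IsAssocMap Γ s hs ψ f →
        ∀ (α : ℂ) (hα : α ∈ Γ) (i : ℕ) (β : ℂ) (hβ : β ∈ Γ) (j : ℕ),
          ψ (lgen Γ s α hα i) (lgen Γ s β hβ j)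
            - f (bkt Γ s hs (lgen Γ s α hα i) (lgen Γ s β hβ j)) = 0 :=
  cocycle_LL_general Γ s hs

end SVSuper
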